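/- Let E be a directed graph and c a cycle without exits in E. For any finite paths α, β with r(α) = s(c^m) and r(β) = s(c^n) for positive integers m, n, the product (α c^m α*)(β c^n β*) in the Leavitt path algebra L_R(E) equals α c^{m+n} α* if α = β (so m-cycle and n-cycle share the same base), and equals 0 if α ≠ β and α, β both lie in F_E(c^0) ∪ {s(c)} with neither extending the other through the cycle. -/

import Mathlib

/-- A directed graph: vertices, edges, source and range maps. -/
structure LGraph where
  V : Type
  E : Type
  s : E → V
  r : E → V

/-- A walk: a candidate finite path, given by a source vertex and a list of edges. -/
structure Walk (G : LGraph) where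
  src : G.V
  edges : List G.E

/-- The range (final vertex) of a walk. -/
def Walk.rng {G : LGraph} (p : Walk G) : G.V :=
  match p.edges.getLast? with
  | none => p.src
  | some e => G.r e

/-- Appending two walks. -/
def Walk.append {G : LGraph} (p q : Walk G) : Walk G := ⟨p.src, p.edges ++ q.edges⟩

/-- The `n`-fold power of a walk (concatenation with itself). -/
def Walk.pow {G : LGraph} (c : Walk G) (n : ℕ) : Walk G :=
  ⟨c.src, (List.replicate n c.edges).flatten⟩

namespace LGraph
variable (G : LGraph)

/-- A walk is a genuine finite path: the first edge starts at the source and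
consecutive edges match up. -/
def IsPath (p : Walk G) : Prop :=
  (∀ e, p.edges.head? = some e → G.s e = p.src) ∧
    p.edges.Chain' (fun a b => G.r a = G.s b)

/-- A subset of vertices is hereditary. -/
def Hereditary (H : Set G.V) : Prop :=
  ∀ p : Walk G, G.IsPath p → p.src ∈ H → p.rng ∈ H

/-- A regular vertex: emits at least one and finitely many edges. -/
def Regular (v : G.V) : Prop :=
  {e | G.s e = v}.Finite ∧ {e | G.s e = v}.Nonempty

/-- A subset of vertices is saturated. -/
def Saturated (H : Set G.V) : Prop :=
  ∀ v, G.Regular v → (∀ e, G.s e = v → G.r e ∈ H) → v ∈ H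

/-- The saturated closure: the smallest hereditary and saturated set containing `H`. -/
def satClosure (H : Set G.V) : Set G.V :=
  ⋂₀ {K | H ⊆ K ∧ G.Hereditary K ∧ G.Saturated K}

/-- The set of vertices of a walk (sources of its edges). -/
def verts (c : Walk G) : Set G.V := {v | ∃ e ∈ c.edges, G.s e = v}

/-- A cycle: a nontrivial closed path with no repeated vertices except the base. -/
def IsCycle (c : Walk G) : Prop :=
  G.IsPath c ∧ c.edges ≠ [] ∧ c.rng = c.src ∧ (c.edges.map G.s).Nodup

/-- A cycle (or walk) has no exits: each vertex on it emits only the edge of the walk. -/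
def NoExits (c : Walk G) : Prop :=
  ∀ e ∈ c.edges, ∀ e', G.s e' = G.s e → e' = e

/-- `F_E(H)`: paths reaching `H` exactly at their final vertex. -/
def FE (H : Set G.V) : Set (Walk G) :=
  {α | G.IsPath α ∧ α.edges ≠ [] ∧ α.src ∉ H ∧
       (∀ e ∈ α.edges.dropLast, G.r e ∉ H) ∧ α.rng ∈ H}

/-- The breaking vertices of `H`. -/
def BH (H : Set G.V) : Set G.V :=
  {v | v ∉ H ∧ {e | G.s e = v}.Infinite ∧
       {e | G.s e = v ∧ G.r e ∉ H}.Nonempty ∧ {e | G.s e = v ∧ G.r e ∉ H}.Finite}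

/-- `F_E'(H)`: members of `F_E(H)` whose last edge has source not a breaking vertex. -/
def FE' (H : Set G.V) : Set (Walk G) :=
  {α | α ∈ G.FE H ∧ ∀ e, α.edges.getLast? = some e → G.s e ∉ G.BH H}

/-- Condition (F): `H ∪ F_E'(H) ∪ {α ∈ Path(E) : r(α) ∈ B_H}` is finite. -/
def ConditionF (H : Set G.V) : Prop :=
  H.Finite ∧ (G.FE' H).Finite ∧ {α : Walk G | G.IsPath α ∧ α.rng ∈ G.BH H}.Finite

/-- An infinite path, given by its sequence of edges. -/
def IsInfPath (x : ℕ → G.E) : Prop := ∀ i, G.r (x i) = G.s (x (i + 1))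

/-- The edge sequence of the concatenation of a finite walk with an infinite edge sequence. -/
def concatSeq (p : Walk G) (x : ℕ → G.E) : ℕ → G.E := fun n =>
  if h : n < p.edges.length then p.edges.get ⟨n, h⟩ else x (n - p.edges.length)

end LGraph

/-- Generators of the Leavitt path algebra: vertices, edges, and ghost edges. -/
inductive LGen (G : LGraph) : Type
  | vert : G.V → LGen G
  | edge : G.E → LGen G
  | ghost : G.E → LGen G

/-- The defining relations (V), (E1), (E2), (CK1), (CK2) of the Leavitt path algebra. -/
inductive LeavittRel (R : Type) [CommRing R] (G : LGraph) :
    FreeAlgebra R (LGen G) → FreeAlgebra R (LGen G) → Prop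
  | v_same (v : G.V) : LeavittRel R G
      (FreeAlgebra.ι R (LGen.vert v) * FreeAlgebra.ι R (LGen.vert v))
      (FreeAlgebra.ι R (LGen.vert v))
  | v_diff (v w : G.V) (h : v ≠ w) : LeavittRel R G
      (FreeAlgebra.ι R (LGen.vert v) * FreeAlgebra.ι R (LGen.vert w)) 0
  | e1_left (e : G.E) : LeavittRel R G
      (FreeAlgebra.ι R (LGen.vert (G.s e)) * FreeAlgebra.ι R (LGen.edge e))
      (FreeAlgebra.ι R (LGen.edge e))
  | e1_right (e : G.E) : LeavittRel R G
      (FreeAlgebra.ι R (LGen.edge e) * FreeAlgebra.ι R (LGen.vert (G.r e)))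
      (FreeAlgebra.ι R (LGen.edge e))
  | e2_left (e : G.E) : LeavittRel R G
      (FreeAlgebra.ι R (LGen.vert (G.r e)) * FreeAlgebra.ι R (LGen.ghost e))
      (FreeAlgebra.ι R (LGen.ghost e))
  | e2_right (e : G.E) : LeavittRel R G
      (FreeAlgebra.ι R (LGen.ghost e) * FreeAlgebra.ι R (LGen.vert (G.s e)))
      (FreeAlgebra.ι R (LGen.ghost e))
  | ck1_same (e : G.E) : LeavittRel R G
      (FreeAlgebra.ι R (LGen.ghost e) * FreeAlgebra.ι R (LGen.edge e))
      (FreeAlgebra.ι R (LGen.vert (G.r e)))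
  | ck1_diff (e f : G.E) (h : e ≠ f) : LeavittRel R G
      (FreeAlgebra.ι R (LGen.ghost e) * FreeAlgebra.ι R (LGen.edge f)) 0
  | ck2 (v : G.V) (hf : {e | G.s e = v}.Finite) (hn : {e | G.s e = v}.Nonempty) :
      LeavittRel R G (FreeAlgebra.ι R (LGen.vert v))
        (∑ e ∈ hf.toFinset, FreeAlgebra.ι R (LGen.edge e) * FreeAlgebra.ι R (LGen.ghost e))

/-- The Leavitt path algebra `L_R(E)`. -/
abbrev Leavitt (R : Type) [CommRing R] (G : LGraph) : Type := RingQuot (LeavittRel R G)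

variable (R : Type) [CommRing R] (G : LGraph)

/-- The vertex idempotent `v ∈ L_R(E)`. -/
def lv (v : G.V) : Leavitt R G :=
  RingQuot.mkRingHom (LeavittRel R G) (FreeAlgebra.ι R (LGen.vert v))

/-- The edge element `e ∈ L_R(E)`. -/
def le (e : G.E) : Leavitt R G :=
  RingQuot.mkRingHom (LeavittRel R G) (FreeAlgebra.ι R (LGen.edge e))

/-- The ghost edge element `e* ∈ L_R(E)`. -/
def lg (e : G.E) : Leavitt R G :=
  RingQuot.mkRingHom (LeavittRel R G) (FreeAlgebra.ι R (LGen.ghost e))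

/-- The element `α ∈ L_R(E)` associated to a path `α`. -/
def lpath (α : Walk G) : Leavitt R G :=
  lv R G α.src * (α.edges.map (le R G)).prod

/-- The ghost element `α* ∈ L_R(E)` associated to a path `α`. -/
def lstar (α : Walk G) : Leavitt R G :=
  (α.edges.reverse.map (lg R G)).prod * lv R G α.src

/-! For a path `α` the relations `e* e = r(e)` telescope to `α* α = r(α)`, so for `α = β` the
product collapses to `α c^m c^n α* = α c^{m+n} α*`. The same peeling of common first edges,
together with `e* f = 0` for `e ≠ f` and `v w = 0` for `v ≠ w`, shows `α* β = 0` unless one of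
`α, β` is an initial segment of the other. Two distinct members of `F_E(c⁰) ∪ {s(c)}` are never
comparable in this way, since a path in `F_E(c⁰)` starts outside `c⁰` and meets it only at its
last vertex. -/

variable {R G}

namespace Walk

def IsPrefix (p q : Walk G) : Prop := p.src = q.src ∧ p.edges <+: q.edges

lemma rng_cons (v : G.V) (a : G.E) (l : List G.E) :
    (⟨v, a :: l⟩ : Walk G).rng = (⟨G.r a, l⟩ : Walk G).rng := by
  cases l with
  | nil => rfl
  | cons b l =>
    rw [Walk.rng, Walk.rng, List.getLast?_cons_cons,
      List.getLast?_eq_some_getLast (List.cons_ne_nil _ _)]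

lemma rng_eq_getLast (p : Walk G) (h : p.edges ≠ []) : p.rng = G.r (p.edges.getLast h) := by
  rw [Walk.rng, List.getLast?_eq_some_getLast h]

lemma rng_append {p q : Walk G} (h : p.rng = q.src) : (p.append q).rng = q.rng := by
  obtain ⟨v, l⟩ := p
  induction l generalizing v with
  | nil => obtain ⟨w, l'⟩ := q; cases h; rfl
  | cons a l ih =>
    rw [rng_cons] at h
    exact (rng_cons v a _).trans (ih (G.r a) h)

lemma pow_succ (c : Walk G) (m : ℕ) : c.pow (m + 1) = c.append (c.pow m) := by
  simp [Walk.pow, Walk.append, List.replicate_succ]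

lemma pow_add (c : Walk G) (m n : ℕ) : c.pow (m + n) = (c.pow m).append (c.pow n) := by
  simp only [Walk.pow, Walk.append, List.replicate_add, List.flatten_append]

lemma rng_pow {c : Walk G} (h : c.rng = c.src) (m : ℕ) : (c.pow m).rng = c.src := by
  induction m with
  | zero => rfl
  | succ m ih => rw [pow_succ, rng_append (q := c.pow m) h, ih]

end Walk

namespace LGraph

lemma isPath_cons_iff (v : G.V) (a : G.E) (l : List G.E) :
    G.IsPath ⟨v, a :: l⟩ ↔ G.s a = v ∧ G.IsPath ⟨G.r a, l⟩ := by
  simp only [IsPath, List.Chain', List.isChain_cons, List.head?_cons, Option.some.injEq,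
    forall_eq', Option.mem_def, @eq_comm _ (G.r a)]

lemma IsCycle.src_mem_verts {c : Walk G} (hc : G.IsCycle c) : c.src ∈ G.verts c := by
  obtain ⟨a, l, hl⟩ := List.exists_cons_of_ne_nil hc.2.1
  exact ⟨a, by simp [hl], hc.1.1 a (by simp [hl])⟩

lemma eq_of_isPrefix_of_mem_insert_FE {H : Set G.V} {v : G.V} (hv : v ∈ H) {α β : Walk G}
    (hα : α ∈ insert ⟨v, []⟩ (G.FE H)) (hβ : β ∈ insert ⟨v, []⟩ (G.FE H))
    (h : α.IsPrefix β) : α = β := by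
  obtain ⟨hsrc, cs, hcs⟩ := h
  rcases hα with rfl | hαF <;> rcases hβ with rfl | hβF
  · rfl
  · exact absurd (hsrc ▸ hv) hβF.2.2.1
  · exact absurd (hsrc ▸ hv) hαF.2.2.1
  · rcases eq_or_ne cs [] with rfl | hcs0
    · obtain ⟨v, l⟩ := α
      obtain ⟨w, l'⟩ := β
      simp_all
    · have hlast : α.edges.getLast hαF.2.1 ∈ β.edges.dropLast := by
        rw [← hcs, List.dropLast_append_of_ne_nil hcs0]
        exact List.mem_append_left _ (List.getLast_mem _)
      exact absurd (α.rng_eq_getLast hαF.2.1 ▸ hαF.2.2.2.2) (hβF.2.2.2.1 _ hlast)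

end LGraph

lemma lv_mul_lv_self (v : G.V) : lv R G v * lv R G v = lv R G v := by
  rw [lv, ← map_mul]; exact RingQuot.mkRingHom_rel (LeavittRel.v_same v)

lemma lv_mul_lv_of_ne {v w : G.V} (h : v ≠ w) : lv R G v * lv R G w = 0 := by
  rw [lv, lv, ← map_mul, RingQuot.mkRingHom_rel (LeavittRel.v_diff v w h), map_zero]

lemma le_mul_lv (e : G.E) : le R G e * lv R G (G.r e) = le R G e := by
  rw [lv, le, ← map_mul]; exact RingQuot.mkRingHom_rel (LeavittRel.e1_right e)

lemma lv_mul_lg (e : G.E) : lv R G (G.r e) * lg R G e = lg R G e := by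
  rw [lv, lg, ← map_mul]; exact RingQuot.mkRingHom_rel (LeavittRel.e2_left e)

lemma lg_mul_lv (e : G.E) : lg R G e * lv R G (G.s e) = lg R G e := by
  rw [lv, lg, ← map_mul]; exact RingQuot.mkRingHom_rel (LeavittRel.e2_right e)

lemma lg_mul_le_self (e : G.E) : lg R G e * le R G e = lv R G (G.r e) := by
  rw [lv, le, lg, ← map_mul]; exact RingQuot.mkRingHom_rel (LeavittRel.ck1_same e)

lemma lg_mul_le_of_ne {e f : G.E} (h : e ≠ f) : lg R G e * le R G f = 0 := by
  rw [le, lg, ← map_mul, RingQuot.mkRingHom_rel (LeavittRel.ck1_diff e f h), map_zero]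

lemma lv_src_mul_lpath (p : Walk G) : lv R G p.src * lpath R G p = lpath R G p := by
  rw [lpath, ← mul_assoc, lv_mul_lv_self]

lemma lstar_mul_lv_src (p : Walk G) : lstar R G p * lv R G p.src = lstar R G p := by
  rw [lstar, mul_assoc, lv_mul_lv_self]

lemma lpath_cons (v : G.V) (a : G.E) (l : List G.E) :
    lpath R G ⟨v, a :: l⟩ = lv R G v * le R G a * lpath R G ⟨G.r a, l⟩ := by
  simp only [lpath, List.map_cons, List.prod_cons, mul_assoc]
  rw [← mul_assoc (le R G a), le_mul_lv]

lemma lstar_cons (v : G.V) (a : G.E) (l : List G.E) :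
    lstar R G ⟨v, a :: l⟩ = lstar R G ⟨G.r a, l⟩ * lg R G a * lv R G v := by
  simp only [lstar, List.reverse_cons, List.map_append, List.prod_append, List.map_cons,
    List.map_nil, List.prod_cons, List.prod_nil, mul_one, mul_assoc, lv_mul_lg]

lemma lpath_append {p q : Walk G} (h : p.rng = q.src) :
    lpath R G (p.append q) = lpath R G p * lpath R G q := by
  obtain ⟨v, l⟩ := p
  induction l generalizing v with
  | nil =>
    obtain ⟨w, l'⟩ := q
    cases h
    show lpath R G ⟨v, l'⟩ = lv R G v * 1 * lpath R G ⟨v, l'⟩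
    rw [mul_one]
    exact (lv_src_mul_lpath _).symm
  | cons a l ih =>
    rw [Walk.rng_cons] at h
    calc lpath R G ((⟨v, a :: l⟩ : Walk G).append q)
        = lv R G v * le R G a * lpath R G ((⟨G.r a, l⟩ : Walk G).append q) := lpath_cons v a _
      _ = _ := by rw [ih _ h, lpath_cons, ← mul_assoc]

lemma lstar_cons_mul_lpath_cons_self {v : G.V} {a : G.E} (h : G.s a = v) (as bs : List G.E) :
    lstar R G ⟨v, a :: as⟩ * lpath R G ⟨v, a :: bs⟩ =
      lstar R G ⟨G.r a, as⟩ * lpath R G ⟨G.r a, bs⟩ := by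
  subst h
  calc _ = lstar R G ⟨G.r a, as⟩ * (lg R G a * lv R G (G.s a) * lv R G (G.s a) * le R G a) *
        lpath R G ⟨G.r a, bs⟩ := by rw [lstar_cons, lpath_cons]; simp only [mul_assoc]
    _ = lstar R G ⟨G.r a, as⟩ * lv R G (G.r a) * lpath R G ⟨G.r a, bs⟩ := by
        rw [lg_mul_lv, lg_mul_lv, lg_mul_le_self, mul_assoc]
    _ = _ := by rw [lstar_mul_lv_src]

lemma lstar_cons_mul_lpath_cons_eq_zero {v : G.V} {a b : G.E} (h : ¬(a = b ∧ G.s a = v))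
    (as bs : List G.E) : lstar R G ⟨v, a :: as⟩ * lpath R G ⟨v, b :: bs⟩ = 0 := by
  have hmid : lg R G a * lv R G v * (lv R G v * le R G b) = 0 := by
    by_cases hv : G.s a = v
    · subst hv
      rw [lg_mul_lv, ← mul_assoc, lg_mul_lv, lg_mul_le_of_ne fun hab => h ⟨hab, rfl⟩]
    · rw [← lg_mul_lv a, mul_assoc (lg R G a), lv_mul_lv_of_ne hv, mul_zero, zero_mul]
  rw [lstar_cons, lpath_cons]
  calc _ = lstar R G ⟨G.r a, as⟩ * (lg R G a * lv R G v * (lv R G v * le R G b)) *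
        lpath R G ⟨G.r b, bs⟩ := by simp only [mul_assoc]
    _ = 0 := by rw [hmid, mul_zero, zero_mul]

lemma lstar_mul_lpath_self {p : Walk G} (hp : G.IsPath p) :
    lstar R G p * lpath R G p = lv R G p.rng := by
  obtain ⟨v, l⟩ := p
  induction l generalizing v with
  | nil => simp [lstar, lpath, Walk.rng, lv_mul_lv_self]
  | cons a l ih =>
    rw [LGraph.isPath_cons_iff] at hp
    rw [lstar_cons_mul_lpath_cons_self hp.1, Walk.rng_cons]
    exact ih _ hp.2

lemma lstar_mul_lpath_eq_zero {α β : Walk G} (h₁ : ¬α.IsPrefix β) (h₂ : ¬β.IsPrefix α) :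
    lstar R G α * lpath R G β = 0 := by
  obtain ⟨v, as⟩ := α
  obtain ⟨w, bs⟩ := β
  rcases eq_or_ne v w with rfl | hvw
  · induction as generalizing v bs with
    | nil => exact (h₁ ⟨rfl, List.nil_prefix⟩).elim
    | cons a as ih =>
      cases bs with
      | nil => exact (h₂ ⟨rfl, List.nil_prefix⟩).elim
      | cons b bs =>
        by_cases hab : a = b ∧ G.s a = v
        · obtain ⟨rfl, hv⟩ := hab
          rw [lstar_cons_mul_lpath_cons_self hv]
          exact ih _ _ (by simpa [Walk.IsPrefix] using h₁) (by simpa [Walk.IsPrefix] using h₂)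
        · exact lstar_cons_mul_lpath_cons_eq_zero hab as bs
  · rw [← lstar_mul_lv_src, ← lv_src_mul_lpath, mul_assoc, ← mul_assoc (lv R G _),
      lv_mul_lv_of_ne hvw, zero_mul, mul_zero]

theorem cycle_products_general (R : Type) [CommRing R] (G : LGraph) (c α β : Walk G)
    (hc : G.IsCycle c)
    (hα : G.IsPath α)
    (hra : α.rng = c.src)
    (m n : ℕ) :
    (α = β →
        lpath R G α * lpath R G (c.pow m) * lstar R G α *
            (lpath R G β * lpath R G (c.pow n) * lstar R G β) =
          lpath R G α * lpath R G (c.pow (m + n)) * lstar R G α) ∧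
      (α ≠ β → α ∈ insert (⟨c.src, []⟩ : Walk G) (G.FE (G.verts c)) →
        β ∈ insert (⟨c.src, []⟩ : Walk G) (G.FE (G.verts c)) →
        lpath R G α * lpath R G (c.pow m) * lstar R G α *
            (lpath R G β * lpath R G (c.pow n) * lstar R G β) = 0) := by
  refine ⟨?_, fun hne hαm hβm => ?_⟩
  · rintro rfl
    have hαα : lstar R G α * lpath R G α = lv R G c.src := hra ▸ lstar_mul_lpath_self hα
    have hcn : lv R G c.src * lpath R G (c.pow n) = lpath R G (c.pow n) :=
      lv_src_mul_lpath (c.pow n)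
    have hcmn : lpath R G (c.pow m) * lpath R G (c.pow n) = lpath R G (c.pow (m + n)) := by
      rw [Walk.pow_add, lpath_append (q := c.pow n) (Walk.rng_pow hc.2.2.1 m)]
    calc _ = lpath R G α * (lpath R G (c.pow m) * ((lstar R G α * lpath R G α) *
          lpath R G (c.pow n))) * lstar R G α := by simp only [mul_assoc]
      _ = _ := by rw [hαα, hcn, hcmn]
  · have hαβ : lstar R G α * lpath R G β = 0 :=
      lstar_mul_lpath_eq_zero
        (fun h => hne (LGraph.eq_of_isPrefix_of_mem_insert_FE hc.src_mem_verts hαm hβm h))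
        (fun h => hne (LGraph.eq_of_isPrefix_of_mem_insert_FE hc.src_mem_verts hβm hαm h).symm)
    calc _ = lpath R G α * lpath R G (c.pow m) * (lstar R G α * lpath R G β) *
          (lpath R G (c.pow n) * lstar R G β) := by simp only [mul_assoc]
      _ = 0 := by rw [hαβ, mul_zero, zero_mul]

/-- for a cycle without exits `c` and paths `α, β` ending at the base of
`c`, one has `(αc^mα*)(βc^nβ*) = αc^{m+n}α*` when `α = β`, and the product is `0` when
`α ≠ β` with `α, β ∈ F_E(c⁰) ∪ {s(c)}`. -/
theorem cycle_products (R : Type) [CommRing R] (G : LGraph) (c α β : Walk G)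
    (hc : G.IsCycle c) (hce : G.NoExits c)
    (hα : G.IsPath α) (hβ : G.IsPath β)
    (hra : α.rng = c.src) (hrb : β.rng = c.src)
    (m n : ℕ) (hm : 0 < m) (hn : 0 < n) :
    (α = β →
        lpath R G α * lpath R G (c.pow m) * lstar R G α *
            (lpath R G β * lpath R G (c.pow n) * lstar R G β) =
          lpath R G α * lpath R G (c.pow (m + n)) * lstar R G α) ∧
      (α ≠ β → α ∈ insert (⟨c.src, []⟩ : Walk G) (G.FE (G.verts c)) →
        β ∈ insert (⟨c.src, []⟩ : Walk G) (G.FE (G.verts c)) →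
        lpath R G α * lpath R G (c.pow m) * lstar R G α *
            (lpath R G β * lpath R G (c.pow n) * lstar R G β) = 0) :=
  cycle_products_general R G c α β hc hα hra m n
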